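/- A simply connected compact complex manifold does not admit any branched flat holomorphic affine structure. -/

import Mathlib

open scoped Manifold
open Function Set

noncomputable section

section ProjectiveTargets

variable {EM : Type*} [NormedAddCommGroup EM] [NormedSpace ℂ EM]
  {M : Type*} [TopologicalSpace M] [ChartedSpace EM M]

/-- The complex projective space `ℂP^N`, as the projectivization of `ℂ^{N+1}`. -/
abbrev ProjSpace (N : ℕ) := Projectivization ℂ (Fin (N + 1) → ℂ)

/-- The rank at `x` of (the differential of) the map to projective space determined by the
nowhere vanishing holomorphic lift `F : M → ℂ^{N+1} \ {0}`: the dimension of the span of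
`F x` together with the image of the differential of `F` at `x`. -/
def projLiftRankAt {N : ℕ} (F : M → (Fin (N + 1) → ℂ)) (x : M) : ℕ :=
  Module.finrank ℂ
    ↥(Submodule.span ℂ
      (insert (F x) (Set.range (mfderiv 𝓘(ℂ, EM) 𝓘(ℂ, Fin (N + 1) → ℂ) F x))))

/-- A map from a complex manifold to projective space is holomorphic on `U` if around
every point of `U` it admits a nowhere vanishing holomorphic lift to `ℂ^{N+1}`. -/
def HolomorphicToProj {N : ℕ} (f : M → ProjSpace N) (U : Set M) : Prop :=
  ∀ x ∈ U, ∃ V : Set M, IsOpen V ∧ x ∈ V ∧ V ⊆ U ∧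
    ∃ F : M → (Fin (N + 1) → ℂ),
      MDifferentiableOn 𝓘(ℂ, EM) 𝓘(ℂ, Fin (N + 1) → ℂ) F V ∧
      ∀ y ∈ V, ∃ hy : F y ≠ 0, f y = Projectivization.mk ℂ (F y) hy

/-- A complex manifold of dimension `m` is projective if it admits a holomorphic injective
immersion (hence, being compact, an embedding) into some complex projective space. -/
def IsProjectiveCplxManifold (m : ℕ) (M : Type*) [TopologicalSpace M]
    [ChartedSpace EM M] : Prop :=
  ∃ (N : ℕ) (f : M → ProjSpace N), Function.Injective f ∧
    ∀ x : M, ∃ V : Set M, IsOpen V ∧ x ∈ V ∧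
      ∃ F : M → (Fin (N + 1) → ℂ),
        MDifferentiableOn 𝓘(ℂ, EM) 𝓘(ℂ, Fin (N + 1) → ℂ) F V ∧
        (∀ y ∈ V, ∃ hy : F y ≠ 0, f y = Projectivization.mk ℂ (F y) hy) ∧
        projLiftRankAt (EM := EM) F x = m + 1

end ProjectiveTargets

section BranchedAtlases

variable {M : Type*} {m : ℕ} [TopologicalSpace M] [ChartedSpace (Fin m → ℂ) M]

/-- The chart `φ` (with values in `ℂP^m`) is unbranched at `y`: some local nowhere
vanishing holomorphic lift of `φ` has maximal rank `m + 1` at `y`, i.e. `φ` is a local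
biholomorphism at `y`. -/
def ProjChartUnbranchedAt (φ : M → ProjSpace m) (U : Set M) (y : M) : Prop :=
  ∃ V : Set M, IsOpen V ∧ y ∈ V ∧ V ⊆ U ∧
    ∃ F : M → (Fin (m + 1) → ℂ),
      MDifferentiableOn 𝓘(ℂ, Fin m → ℂ) 𝓘(ℂ, Fin (m + 1) → ℂ) F V ∧
      (∀ z ∈ V, ∃ hz : F z ≠ 0, φ z = Projectivization.mk ℂ (F z) hz) ∧
      projLiftRankAt (EM := Fin m → ℂ) F y = m + 1

/-- A branched flat holomorphic projective structure on the `m`-dimensional complex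
manifold `M`, presented by its developing atlas: an open cover `(Uᵢ)` with holomorphic
charts `φᵢ : Uᵢ → ℂP^m` which are local biholomorphisms on a dense subset of `Uᵢ`, whose
transition maps are restrictions of elements of `PGL(m+1, ℂ)` (projectivized linear
automorphisms of `ℂ^{m+1}`) on each connected component of the overlaps. -/
def HasBranchedFlatProjectiveStructure (m : ℕ) (M : Type*) [TopologicalSpace M]
    [ChartedSpace (Fin m → ℂ) M] : Prop :=
  ∃ (ι : Type) (U : ι → Set M) (φ : ι → M → ProjSpace m),
    (∀ i, IsOpen (U i)) ∧ (⋃ i, U i) = univ ∧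
    (∀ i, HolomorphicToProj (EM := Fin m → ℂ) (φ i) (U i)) ∧
    (∀ i, ∀ x ∈ U i, x ∈ closure {y ∈ U i | ProjChartUnbranchedAt (φ i) (U i) y}) ∧
    (∀ i j, ∀ x ∈ U i ∩ U j,
      ∃ A : (Fin (m + 1) → ℂ) ≃ₗ[ℂ] (Fin (m + 1) → ℂ),
        ∀ y ∈ connectedComponentIn (U i ∩ U j) x,
          φ i y = Projectivization.map A.toLinearMap A.injective (φ j y))

/-- A branched flat holomorphic affine structure on the `m`-dimensional complex manifold
`M`, presented by its developing atlas: an open cover `(Uᵢ)` with holomorphic charts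
`φᵢ : Uᵢ → ℂ^m` which are local biholomorphisms on a dense subset of `Uᵢ`, whose
transition maps are restrictions of complex affine transformations of `ℂ^m` on each
connected component of the overlaps. -/
def HasBranchedFlatAffineStructure (m : ℕ) (M : Type*) [TopologicalSpace M]
    [ChartedSpace (Fin m → ℂ) M] : Prop :=
  ∃ (ι : Type) (U : ι → Set M) (φ : ι → M → (Fin m → ℂ)),
    (∀ i, IsOpen (U i)) ∧ (⋃ i, U i) = univ ∧
    (∀ i, MDifferentiableOn 𝓘(ℂ, Fin m → ℂ) 𝓘(ℂ, Fin m → ℂ) (φ i) (U i)) ∧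
    (∀ i, ∀ x ∈ U i, x ∈ closure {y ∈ U i |
      Function.Bijective (mfderiv 𝓘(ℂ, Fin m → ℂ) 𝓘(ℂ, Fin m → ℂ) (φ i) y)}) ∧
    (∀ i j, ∀ x ∈ U i ∩ U j,
      ∃ (A : (Fin m → ℂ) ≃ₗ[ℂ] (Fin m → ℂ)) (b : Fin m → ℂ),
        ∀ y ∈ connectedComponentIn (U i ∩ U j) x, φ i y = A (φ j y) + b)

end BranchedAtlases

/-!
The affine transition maps of the atlas are uniquely determined near every point, because the
charts are unbranched on a dense set; they form a locally constant cocycle with values in the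
affine group. The flat bundle with discrete fibre defined by this cocycle is a covering space,
so over a simply connected base it has a continuous section, which trivializes the cocycle and
glues the charts, corrected by affine maps, into a global holomorphic developing map `M → ℂ^m`.
On a compact manifold this map is constant, whereas near an unbranched point it is an affine
image of a local biholomorphism.
-/

open Filter Topology

section Cocycle

variable {X : Type*} [TopologicalSpace X] {ι G : Type*} [Group G]

structure IsLocallyConstantCocycle (U : ι → Set X) (g : ι → ι → X → G) : Prop where
  self : ∀ i, ∀ x ∈ U i, g i i x = 1
  mul : ∀ i j k, ∀ x ∈ U i ∩ U j ∩ U k, g i j x * g j k x = g i k x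
  eventuallyEq : ∀ i j, ∀ x ∈ U i ∩ U j, g i j =ᶠ[𝓝 x] fun _ => g i j x

theorem FiberBundleCore.isCoveringMap_proj {F : Type*} [TopologicalSpace F] [DiscreteTopology F]
    (Z : FiberBundleCore ι X F) : IsCoveringMap Z.proj :=
  IsCoveringMap.mk _ (fun _ => F) Z.localTrivAt Z.mem_localTrivAt_baseSet

theorem IsCoveringMap.exists_continuousMap_rightInverse {E : Type*} [TopologicalSpace E]
    [SimplyConnectedSpace X] [LocallyPathConnectedSpace X] {p : E → X} (hp : IsCoveringMap p)
    (e₀ : E) : ∃ s : C(X, E), RightInverse s p := by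
  obtain ⟨s, ⟨-, hs⟩, -⟩ := hp.existsUnique_continuousMap_lifts (ContinuousMap.id X) (p e₀) e₀ rfl
  exact ⟨s, congrFun hs⟩

namespace IsLocallyConstantCocycle

variable {U : ι → Set X} {g : ι → ι → X → G}

def fiberBundleCore [TopologicalSpace G] [DiscreteTopology G]
    (hg : IsLocallyConstantCocycle U g) (hU : ∀ i, IsOpen (U i)) (hcov : ∀ x, ∃ i, x ∈ U i) :
    FiberBundleCore ι X G where
  baseSet := U
  isOpen_baseSet := hU
  indexAt x := (hcov x).choose
  mem_baseSet_at x := (hcov x).choose_spec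
  coordChange i j x v := v * g i j x
  coordChange_self i x hx v := by rw [hg.self i x hx, mul_one]
  continuousOn_coordChange i j := by
    rintro ⟨x, v⟩ ⟨hx, -⟩
    have hgx : ContinuousAt (fun p : X × G => g i j p.1) (x, v) :=
      (continuousAt_const.congr (hg.eventuallyEq i j x hx).symm).comp continuousAt_fst
    exact (continuousAt_snd.mul hgx).continuousWithinAt
  coordChange_comp i j k x hx v := by rw [mul_assoc, hg.mul i j k x hx]

theorem exists_locallyConstant_mul_eq [SimplyConnectedSpace X] [LocallyPathConnectedSpace X]
    (hg : IsLocallyConstantCocycle U g) (hU : ∀ i, IsOpen (U i)) (hcov : ∀ x, ∃ i, x ∈ U i) :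
    ∃ σ : ι → X → G, (∀ i j, ∀ x ∈ U i ∩ U j, σ i x * g i j x = σ j x) ∧
      ∀ i, ∀ x ∈ U i, ∀ᶠ y in 𝓝 x, σ i y = σ i x := by
  let _ : TopologicalSpace G := ⊥
  have : DiscreteTopology G := ⟨rfl⟩
  let Z := hg.fiberBundleCore hU hcov
  obtain ⟨s, hs⟩ :=
    Z.isCoveringMap_proj.exists_continuousMap_rightInverse ⟨Classical.arbitrary X, (1 : G)⟩
  refine ⟨fun i x => (Z.localTriv i (s x)).2, fun i j x hx => ?_, fun i x hx => ?_⟩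
  · have hchange : ∀ p : Z.TotalSpace, p.proj ∈ U i ∩ U j →
        (Z.localTriv i p).2 * g i j p.proj = (Z.localTriv j p).2 := fun p hp =>
      Z.coordChange_comp _ i j p.proj ⟨⟨Z.mem_baseSet_at _, hp.1⟩, hp.2⟩ p.2
    have hsx : (s x).proj = x := hs x
    have := hchange (s x) (hsx.symm ▸ hx)
    rwa [hsx] at this
  · have hsx : s x ∈ (Z.localTriv i).source := (Z.localTriv i).mem_source.2 ((hs x).symm ▸ hx)
    have hc : ContinuousAt (fun y => (Z.localTriv i (s y)).2) x :=
      continuousAt_snd.comp <|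
        ((Z.localTriv i).toOpenPartialHomeomorph.continuousAt hsx).comp s.continuous.continuousAt
    exact hc.preimage_mem_nhds ((isOpen_discrete {_}).mem_nhds rfl)

end IsLocallyConstantCocycle

end Cocycle

section BranchedAffineAtlas

variable {𝕜 : Type*} [NontriviallyNormedField 𝕜]
  {E : Type*} [NormedAddCommGroup E] [NormedSpace 𝕜 E]
  {E' : Type*} [NormedAddCommGroup E'] [NormedSpace 𝕜 E'] {H : Type*} [TopologicalSpace H]
  {I : ModelWithCorners 𝕜 E' H} {M : Type*} [TopologicalSpace M] [ChartedSpace H M]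
  {ι : Type*} {U : ι → Set M} {φ : ι → M → E}

variable (I U φ) in
structure IsBranchedAffineAtlas : Prop where
  isOpen : ∀ i, IsOpen (U i)
  exists_mem : ∀ x, ∃ i, x ∈ U i
  mdifferentiableOn : ∀ i, MDifferentiableOn I 𝓘(𝕜, E) (φ i) (U i)
  mem_closure_surjective : ∀ i, ∀ x ∈ U i,
    x ∈ closure {y | Surjective (mfderiv I 𝓘(𝕜, E) (φ i) y)}
  exists_affineEquiv : ∀ i j, ∀ x ∈ U i ∩ U j,
    ∃ g : E ≃ᵃ[𝕜] E, ∀ᶠ y in 𝓝 x, φ i y = g (φ j y)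

variable (𝕜 φ) in
open Classical in
-- junk value `1` where no affine transition exists near `x`
def affineTransition (i j : ι) (x : M) : E ≃ᵃ[𝕜] E :=
  if h : ∃ g : E ≃ᵃ[𝕜] E, ∀ᶠ y in 𝓝 x, φ i y = g (φ j y) then h.choose else 1

theorem IsBranchedAffineAtlas.affineTransition_spec (hA : IsBranchedAffineAtlas I U φ)
    {i j : ι} {x : M} (hx : x ∈ U i ∩ U j) :
    ∀ᶠ y in 𝓝 x, φ i y = affineTransition 𝕜 φ i j x (φ j y) := by
  have h := hA.exists_affineEquiv i j x hx
  rw [affineTransition, dif_pos h]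
  exact h.choose_spec

variable [CompleteSpace 𝕜] [FiniteDimensional 𝕜 E]
  {F : Type*} [NormedAddCommGroup F] [NormedSpace 𝕜 F]

theorem AffineMap.hasFDerivAt_of_finiteDimensional (f : E →ᵃ[𝕜] F) (x : E) :
    HasFDerivAt f (LinearMap.toContinuousLinearMap f.linear) x :=
  (⟨f, f.continuous_of_finiteDimensional⟩ : E →ᴬ[𝕜] F).hasFDerivAt

theorem AffineMap.eq_of_comp_eventuallyEq {φ : M → E} {y : M}
    (hφ : MDifferentiableAt I 𝓘(𝕜, E) φ y) (hsurj : Surjective (mfderiv I 𝓘(𝕜, E) φ y))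
    {f f' : E →ᵃ[𝕜] F} (h : f ∘ φ =ᶠ[𝓝 y] f' ∘ φ) : f = f' := by
  have hD : ∀ f : E →ᵃ[𝕜] F, mfderiv I 𝓘(𝕜, F) (f ∘ φ) y =
      (LinearMap.toContinuousLinearMap f.linear).comp (mfderiv I 𝓘(𝕜, E) φ y) := fun f =>
    ((f.hasFDerivAt_of_finiteDimensional (φ y)).hasMFDerivAt.comp y hφ.hasMFDerivAt).mfderiv
  have hlin : f.linear = f'.linear := by
    ext v
    obtain ⟨w, rfl⟩ := hsurj v
    have : mfderiv I 𝓘(𝕜, F) (f ∘ φ) y = mfderiv I 𝓘(𝕜, F) (f' ∘ φ) y := h.mfderiv_eq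
    rw [hD, hD] at this
    exact congrArg (· w) this
  exact AffineMap.ext_linear hlin h.self_of_nhds

namespace IsBranchedAffineAtlas

theorem eq_of_comp_eventuallyEq (hA : IsBranchedAffineAtlas I U φ) {i : ι} {x : M}
    (hx : x ∈ U i) {f f' : E →ᵃ[𝕜] F} (h : f ∘ φ i =ᶠ[𝓝 x] f' ∘ φ i) : f = f' := by
  obtain ⟨y, hsurj, hy, hyU⟩ := ((mem_closure_iff_frequently.1
    (hA.mem_closure_surjective i x hx)).and_eventually
      (h.eventuallyEq_nhds.and ((hA.isOpen i).eventually_mem hx))).exists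
  exact AffineMap.eq_of_comp_eventuallyEq
    ((hA.mdifferentiableOn i y hyU).mdifferentiableAt ((hA.isOpen i).mem_nhds hyU)) hsurj hy

theorem affineTransition_eq (hA : IsBranchedAffineAtlas I U φ) {i j : ι} {x : M}
    (hx : x ∈ U i ∩ U j) {g : E ≃ᵃ[𝕜] E} (hg : ∀ᶠ y in 𝓝 x, φ i y = g (φ j y)) :
    affineTransition 𝕜 φ i j x = g :=
  AffineEquiv.toAffineMap_injective <| hA.eq_of_comp_eventuallyEq hx.2 <|
    (hA.affineTransition_spec hx).mp (hg.mono fun _ hg ht => ht.symm.trans hg)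

theorem isLocallyConstantCocycle_affineTransition (hA : IsBranchedAffineAtlas I U φ) :
    IsLocallyConstantCocycle U (affineTransition 𝕜 φ) where
  self i x hx := hA.affineTransition_eq ⟨hx, hx⟩ (Eventually.of_forall fun _ => rfl)
  mul i j k x hx := by
    refine (hA.affineTransition_eq ⟨hx.1.1, hx.2⟩ ?_).symm
    filter_upwards [hA.affineTransition_spec hx.1, hA.affineTransition_spec ⟨hx.1.2, hx.2⟩]
      with y hij hjk
    rw [hij, hjk, AffineEquiv.coe_mul, comp_apply]
  eventuallyEq i j x hx := by
    filter_upwards [(hA.affineTransition_spec hx).eventually_nhds,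
      ((hA.isOpen i).inter (hA.isOpen j)).eventually_mem hx] with y hy hyU
    exact hA.affineTransition_eq hyU hy

theorem exists_developingMap [SimplyConnectedSpace M] [LocallyPathConnectedSpace M]
    (hA : IsBranchedAffineAtlas I U φ) :
    ∃ dev : M → E, ∀ x, ∃ i, x ∈ U i ∧ ∃ g : E ≃ᵃ[𝕜] E, dev =ᶠ[𝓝 x] g ∘ φ i := by
  obtain ⟨σ, hσ, hσ_loc⟩ := hA.isLocallyConstantCocycle_affineTransition
    |>.exists_locallyConstant_mul_eq hA.isOpen hA.exists_mem
  choose idx hidx using hA.exists_mem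
  refine ⟨fun y => σ (idx y) y (φ (idx y) y), fun x => ⟨idx x, hidx x, σ (idx x) x, ?_⟩⟩
  filter_upwards [hσ_loc _ x (hidx x), (hA.isOpen _).eventually_mem (hidx x)] with y hσy hy
  have hφy := (hA.affineTransition_spec ⟨hy, hidx y⟩).self_of_nhds
  rw [comp_apply, ← hσy, hφy, ← comp_apply (f := σ (idx x) y), ← AffineEquiv.coe_mul,
    hσ _ _ y ⟨hy, hidx y⟩]

end IsBranchedAffineAtlas

end BranchedAffineAtlas

theorem not_isBranchedAffineAtlas {E : Type*} [NormedAddCommGroup E] [NormedSpace ℂ E]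
    [FiniteDimensional ℂ E] [Nontrivial E] {E' : Type*} [NormedAddCommGroup E']
    [NormedSpace ℂ E'] {H : Type*} [TopologicalSpace H] {I : ModelWithCorners ℂ E' H}
    [I.Boundaryless] {M : Type*} [TopologicalSpace M] [ChartedSpace H M] [IsManifold I 1 M]
    [CompactSpace M] [SimplyConnectedSpace M] [LocallyPathConnectedSpace M] {ι : Type*}
    (U : ι → Set M) (φ : ι → M → E) :
    ¬ IsBranchedAffineAtlas I U φ := by
  intro hA
  obtain ⟨dev, hdev⟩ := hA.exists_developingMap
  have hdiff : MDifferentiable I 𝓘(ℂ, E) dev := fun x => by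
    obtain ⟨i, hx, g, hg⟩ := hdev x
    have hφ := (hA.mdifferentiableOn i x hx).mdifferentiableAt ((hA.isOpen i).mem_nhds hx)
    exact ((g.toAffineMap.hasFDerivAt_of_finiteDimensional _).differentiableAt
      |>.mdifferentiableAt.comp x hφ).congr_of_eventuallyEq hg
  obtain ⟨c, hc⟩ := hdiff.exists_eq_const_of_compactSpace
  obtain ⟨i, hx, g, hg⟩ := hdev (Classical.arbitrary M)
  have hgc : g.toAffineMap = AffineMap.const ℂ E c :=
    hA.eq_of_comp_eventuallyEq hx (hg.symm.trans (by rw [hc]; rfl))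
  have hg_const : ∀ u, g u = c := fun u => congrArg (· u) hgc
  obtain ⟨v, w, hvw⟩ := exists_pair_ne E
  exact hvw (g.injective ((hg_const v).trans (hg_const w).symm))

theorem HasBranchedFlatAffineStructure.exists_isBranchedAffineAtlas {m : ℕ} {M : Type*}
    [TopologicalSpace M] [ChartedSpace (Fin m → ℂ) M] [LocallyConnectedSpace M]
    (h : HasBranchedFlatAffineStructure m M) :
    ∃ (ι : Type) (U : ι → Set M) (φ : ι → M → Fin m → ℂ),
      IsBranchedAffineAtlas 𝓘(ℂ, Fin m → ℂ) U φ := by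
  obtain ⟨ι, U, φ, hU, hcov, hφ, hdense, htrans⟩ := h
  refine ⟨ι, U, φ, hU, fun x => mem_iUnion.1 (hcov ▸ mem_univ x), hφ,
    fun i x hx => closure_mono (fun y hy => hy.2.2) (hdense i x hx), fun i j x hx => ?_⟩
  obtain ⟨A, b, hAb⟩ := htrans i j x hx
  refine ⟨A.toAffineEquiv.trans (AffineEquiv.constVAdd ℂ _ b), ?_⟩
  filter_upwards [((hU i).inter (hU j)).connectedComponentIn.mem_nhds
    (mem_connectedComponentIn hx)] with y hy
  rw [hAb y hy]
  simp [add_comm]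

section Statement9

variable {m : ℕ} {M : Type*} [TopologicalSpace M] [ChartedSpace (Fin m → ℂ) M]
  [IsManifold 𝓘(ℂ, Fin m → ℂ) (⊤ : ℕ∞) M]

/-- A (positive-dimensional) simply connected compact complex manifold does not admit any
branched flat holomorphic affine structure. -/
theorem no_branched_flat_affine_structure_of_simply_connected
    [CompactSpace M] [SimplyConnectedSpace M] (hm : 0 < m) :
    ¬ HasBranchedFlatAffineStructure m M := by
  have : Nonempty (Fin m) := ⟨⟨0, hm⟩⟩
  have := ChartedSpace.locallyPathConnectedSpace (Fin m → ℂ) M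
  intro h
  obtain ⟨ι, U, φ, hA⟩ := h.exists_isBranchedAffineAtlas
  exact not_isBranchedAffineAtlas U φ hA

end Statement9
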